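/- Gradient stability from ghost freedom: for every β > 0 and all real X > 0 and H ≠ 0, if M(X,H) > 0, then the effective sound speed squared c_s²(X,H) = P_X(X,H) / (P_X(X,H) + 2X·P_XX(X,H)) is well defined and strictly positive; in fact c_s²(X,H) > 1. -/
import Mathlib


/-- Partial derivative of the effective pressure with respect to `X`. -/
noncomputable def PX (β X H : ℝ) : ℝ :=
  1 - β * (2 * X * H ^ 2 + X ^ 2) / (H ^ 2 + X) ^ 2

/-- Second partial derivative of the effective pressure with respect to `X`. -/
noncomputable def PXX (β X H : ℝ) : ℝ := -2 * β * H ^ 4 / (H ^ 2 + X) ^ 3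

/-- Kinetic response function `M = P_X + 2X·P_XX`. -/
noncomputable def Mresp (β X H : ℝ) : ℝ :=
  1 - β * X * (6 * H ^ 4 + 3 * H ^ 2 * X + X ^ 2) / (H ^ 2 + X) ^ 3

/-- gradient stability from ghost freedom: if `X > 0`, `H ≠ 0` and
`M > 0`, then the sound speed squared `c_s² = P_X/(P_X + 2X·P_XX)` is well defined
and strictly positive; in fact `c_s² > 1`. -/
theorem gradient_stability (β X H : ℝ) (hβ : 0 < β) (hX : 0 < X) (hH : H ≠ 0)
    (hM : 0 < Mresp β X H) :
    PX β X H + 2 * X * PXX β X H ≠ 0 ∧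
    0 < PX β X H / (PX β X H + 2 * X * PXX β X H) ∧
    1 < PX β X H / (PX β X H + 2 * X * PXX β X H) := by
  have hd : (0:ℝ) < H ^ 2 + X := by positivity
  have hd2 : (H ^ 2 + X) ^ 2 ≠ 0 := by positivity
  have hd3 : (H ^ 2 + X) ^ 3 ≠ 0 := by positivity
  have hEq : PX β X H + 2 * X * PXX β X H = Mresp β X H := by
    unfold PX PXX Mresp
    field_simp
    ring
  have hD : 0 < PX β X H + 2 * X * PXX β X H := hEq ▸ hM
  have hPXX : PXX β X H < 0 := by
    unfold PXX
    have h1 : 0 < 2 * β * H ^ 4 / (H ^ 2 + X) ^ 3 := by positivity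
    have h2 : -2 * β * H ^ 4 / (H ^ 2 + X) ^ 3 = -(2 * β * H ^ 4 / (H ^ 2 + X) ^ 3) := by ring
    linarith [h2 ▸ neg_neg_iff_pos.mpr h1]
  have hgt : PX β X H + 2 * X * PXX β X H < PX β X H := by nlinarith
  refine ⟨ne_of_gt hD, ?_, ?_⟩
  · exact div_pos (lt_trans hD hgt) hD
  · exact (one_lt_div hD).mpr hgt
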